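/- Let a, d be complex numbers, let α = (α_i)_{i≥0} be the arithmetical sequence with α_i = a + i·d, and let β = (β_i)_{i≥0} be the alternating sequence with β_i = (-1)^i · a. Then for every positive integer n, det(P_{α,β}(n)) = a(2d + a)^{n-1}. -/

import Mathlib

open Matrix

/-- Entry `P_{i,j}` of the generalized Pascal triangle associated to sequences `α`, `β`:
`P_{i,0} = α i`, `P_{0,j} = β j`, and `P_{i,j} = P_{i-1,j} + P_{i,j-1}` for `i, j ≥ 1`. -/
def pascalEntry {R : Type*} [CommRing R] (α β : ℕ → R) : ℕ → ℕ → R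
  | i, 0 => α i
  | 0, j + 1 => β (j + 1)
  | i + 1, j + 1 => pascalEntry α β i (j + 1) + pascalEntry α β (i + 1) j

/-- The generalized Pascal triangle `P_{α,β}(n)`. -/
def genPascal {R : Type*} [CommRing R] (α β : ℕ → R) (n : ℕ) :
    Matrix (Fin n) (Fin n) R :=
  Matrix.of fun i j => pascalEntry α β (i : ℕ) (j : ℕ)

/-- The Töplitz matrix `T_{α,β}(n)`: `t_{i,j} = α_{i-j}` if `i ≥ j`, else `β_{j-i}`. -/
def toeplitz {R : Type*} [CommRing R] (α β : ℕ → R) (n : ℕ) :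
    Matrix (Fin n) (Fin n) R :=
  Matrix.of fun i j => if (j : ℕ) ≤ (i : ℕ) then α ((i : ℕ) - (j : ℕ)) else β ((j : ℕ) - (i : ℕ))

/-- The unipotent lower triangular matrix `L(n)` with `L_{i,j} = C(i,j)` for `i ≥ j`. -/
def lowerL (R : Type*) [CommRing R] (n : ℕ) : Matrix (Fin n) (Fin n) R :=
  Matrix.of fun i j => if (j : ℕ) ≤ (i : ℕ) then ((i : ℕ).choose (j : ℕ) : R) else 0

/-- The binomial inverse transform `α̂_i = ∑_{k=0}^{i} (-1)^{i+k} C(i,k) α_k`. -/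
def hatSeq {R : Type*} [CommRing R] (α : ℕ → R) (i : ℕ) : R :=
  ∑ k ∈ Finset.range (i + 1), (-1 : R) ^ (i + k) * (i.choose k : R) * α k

/-- The binomial transform `α̌_i = ∑_{k=0}^{i} C(i,k) α_k`. -/
def checkSeq {R : Type*} [CommRing R] (α : ℕ → R) (i : ℕ) : R :=
  ∑ k ∈ Finset.range (i + 1), (i.choose k : R) * α k

/-!
Write `α = checkSeq α'` and `β = checkSeq β'` as binomial transforms of `α' = (a, d, 0, 0, …)` and
`β'_l = (-2)^l a`. Then `P_{α,β}(n) = L T Lᵀ`, where `L` is the binomial matrix and `T` the Toeplitz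
matrix of `α'`, `β'`: both sides satisfy the Pascal recurrence with the same first row and column.
Hence `det P = det T`. The upper part of `T` is geometric with ratio `-2`, so adding twice each column
to the next makes `T` lower triangular with diagonal `a, a + 2d, …, a + 2d`.
-/

section CheckSeq

variable {R : Type*} [CommRing R]

theorem checkSeq_zero (f : ℕ → R) : checkSeq f 0 = f 0 := by
  simp [checkSeq]

theorem checkSeq_add (f g : ℕ → R) (i : ℕ) :
    checkSeq (fun k => f k + g k) i = checkSeq f i + checkSeq g i := by
  simp only [checkSeq, mul_add, Finset.sum_add_distrib]

theorem checkSeq_succ (f : ℕ → R) (i : ℕ) :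
    checkSeq f (i + 1) = checkSeq (fun k => f k + f (k + 1)) i := by
  rw [checkSeq_add]
  simp only [checkSeq]
  rw [Finset.sum_range_succ', Finset.sum_range_succ' (fun k => (i.choose k : R) * f k)]
  simp only [Nat.choose_succ_succ', Nat.cast_add, add_mul, Finset.sum_add_distrib,
    Finset.sum_range_succ (fun k => (i.choose (k + 1) : R) * f (k + 1)), Nat.choose_succ_self,
    Nat.choose_zero_right]
  ring

theorem checkSeq_geometric (c x : R) (i : ℕ) :
    checkSeq (fun k => c ^ k * x) i = (c + 1) ^ i * x := by
  rw [add_pow, Finset.sum_mul, checkSeq]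
  refine Finset.sum_congr rfl fun k _ => ?_
  ring

theorem checkSeq_affine (a d : R) (i : ℕ) :
    checkSeq (fun k => if k = 0 then a else if k = 1 then d else 0) i = a + i * d := by
  rw [checkSeq, Finset.sum_eq_add 0 1 zero_ne_one]
  · simp
  · intro k _ hk
    simp [hk.1, hk.2]
  · simp
  · intro h1
    simp only [Finset.mem_range, not_lt] at h1
    simp [Nat.choose_eq_zero_of_lt (show i < 1 by omega)]

theorem sum_fin_choose_mul {n i : ℕ} (hi : i < n) (f : ℕ → R) :
    ∑ k : Fin n, (i.choose k : R) * f k = checkSeq f i := by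
  rw [Fin.sum_univ_eq_sum_range (fun k => (i.choose k : R) * f k), checkSeq]
  refine (Finset.sum_subset (Finset.range_subset_range.2 hi) fun k _ hk => ?_).symm
  simp only [Finset.mem_range, not_lt] at hk
  simp [Nat.choose_eq_zero_of_lt (show i < k by omega)]

end CheckSeq

section Pascal

variable {R : Type*} [CommRing R]

theorem pascalEntry_eq_of_add {S : ℕ → ℕ → R}
    (hS : ∀ i j, S (i + 1) (j + 1) = S i (j + 1) + S (i + 1) j) (i j : ℕ) :
    pascalEntry (fun i => S i 0) (fun j => S 0 j) i j = S i j := by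
  induction i generalizing j with
  | zero => cases j <;> simp [pascalEntry]
  | succ i ih =>
    induction j with
    | zero => simp [pascalEntry]
    | succ j ihj => rw [pascalEntry, ih, ihj, hS]

def binomialConj (t : ℕ → ℕ → R) (i j : ℕ) : R :=
  checkSeq (fun k => checkSeq (t k) j) i

/-- Pascal's rule `C(i+1,k) = C(i,k) + C(i,k-1)` on both sides turns the shift invariance of a
Toeplitz matrix into the Pascal recurrence. -/
theorem binomialConj_succ_succ {t : ℕ → ℕ → R} (ht : ∀ k l, t (k + 1) (l + 1) = t k l)
    (i j : ℕ) :
    binomialConj t (i + 1) (j + 1) = binomialConj t i (j + 1) + binomialConj t (i + 1) j := by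
  have hshift : ∀ k, checkSeq (t (k + 1)) (j + 1)
      = checkSeq (t k) j + checkSeq (t (k + 1)) j := by
    intro k
    rw [checkSeq_succ, checkSeq_add, add_comm]
    simp only [ht]
  simp only [binomialConj, checkSeq_succ _ i, checkSeq_add, hshift]

end Pascal

def toeplitzEntry {R : Type*} (α β : ℕ → R) (k l : ℕ) : R :=
  if l ≤ k then α (k - l) else β (l - k)

theorem toeplitzEntry_succ_succ {R : Type*} (α β : ℕ → R) (k l : ℕ) :
    toeplitzEntry α β (k + 1) (l + 1) = toeplitzEntry α β k l := by
  simp [toeplitzEntry]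

section Matrix

variable {R : Type*} [CommRing R]

theorem toeplitz_eq_of_toeplitzEntry (α β : ℕ → R) (n : ℕ) :
    toeplitz α β n = of fun i j : Fin n => toeplitzEntry α β i j :=
  rfl

theorem lowerL_apply {n : ℕ} (i j : Fin n) : lowerL R n i j = ((i : ℕ).choose j : R) := by
  rw [lowerL, of_apply, ite_eq_left_iff, not_le]
  intro hij
  rw [Nat.choose_eq_zero_of_lt hij, Nat.cast_zero]

theorem lowerL_mul_mul_transpose_apply (T : ℕ → ℕ → R) {n : ℕ} (i j : Fin n) :
    (lowerL R n * of (fun k l : Fin n => T k l) * (lowerL R n)ᵀ) i j = binomialConj T i j := by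
  simp only [mul_apply, transpose_apply, of_apply, lowerL_apply, Finset.sum_mul]
  rw [Finset.sum_comm, binomialConj, ← sum_fin_choose_mul i.isLt]
  refine Finset.sum_congr rfl fun k _ => ?_
  rw [← sum_fin_choose_mul j.isLt, Finset.mul_sum]
  refine Finset.sum_congr rfl fun l _ => ?_
  ring

theorem genPascal_checkSeq {α β : ℕ → R} (h₀ : α 0 = β 0) (n : ℕ) :
    genPascal (checkSeq α) (checkSeq β) n = lowerL R n * toeplitz α β n * (lowerL R n)ᵀ := by
  set t := toeplitzEntry α β
  have hα : checkSeq α = fun i => binomialConj t i 0 := by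
    funext i
    simp [binomialConj, checkSeq_zero, t, toeplitzEntry]
  have hβ : checkSeq β = fun j => binomialConj t 0 j := by
    funext j
    rw [binomialConj, checkSeq_zero]
    congr 1
    funext l
    cases l <;> simp [t, toeplitzEntry, h₀]
  ext i j
  rw [hα, hβ, genPascal, of_apply, pascalEntry_eq_of_add
    (binomialConj_succ_succ (toeplitzEntry_succ_succ α β))]
  rw [toeplitz_eq_of_toeplitzEntry, lowerL_mul_mul_transpose_apply]

theorem det_lowerL (n : ℕ) : (lowerL R n).det = 1 := by
  rw [det_of_isLowerTriangular _ fun i j (hij : i < j) => by simp [lowerL, not_le.2 hij]]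
  simp [lowerL]

theorem det_genPascal_checkSeq {α β : ℕ → R} (h₀ : α 0 = β 0) (n : ℕ) :
    (genPascal (checkSeq α) (checkSeq β) n).det = (toeplitz α β n).det := by
  rw [genPascal_checkSeq h₀, det_mul, det_mul, det_transpose, det_lowerL, one_mul, mul_one]

/-- Subtracting `c` times each column from the next one makes the matrix lower triangular. -/
theorem det_toeplitz_of_geometric {α β : ℕ → R} (c : R)
    (hβ : ∀ l, β (l + 1) = c ^ (l + 1) * α 0) (m : ℕ) :
    (toeplitz α β (m + 1)).det = α 0 * (α 0 - c * α 1) ^ m := by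
  set t := toeplitzEntry α β
  set B : Matrix (Fin (m + 1)) (Fin (m + 1)) R :=
    of fun i j => if (j : ℕ) = 0 then t i j else t i j - c * t i (j - 1)
  have hcol : (toeplitz α β (m + 1)).det = B.det :=
    det_eq_of_forall_col_eq_smul_add_pred (fun _ => c)
      (fun i => by simp [B, t, toeplitz_eq_of_toeplitzEntry])
      (fun i j => by simp [B, t, toeplitz_eq_of_toeplitzEntry])
  have hupper : ∀ k l, k ≤ l → t k l = c ^ (l - k) * α 0 := by
    intro k l hkl
    obtain ⟨r, rfl⟩ := Nat.exists_eq_add_of_le hkl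
    cases r <;> simp [t, toeplitzEntry, hβ]
  have hB : B.IsLowerTriangular := by
    intro i j (hij : i < j)
    have hj : (j : ℕ) ≠ 0 := by omega
    have hji : (j : ℕ) - (i : ℕ) = (j - 1 - i) + 1 := by omega
    simp only [B, of_apply, if_neg hj, hupper i j hij.le, hupper i (j - 1) (by omega), hji,
      pow_succ]
    ring
  rw [hcol, det_of_isLowerTriangular B hB, Fin.prod_univ_succ]
  simp [B, t, toeplitzEntry]

end Matrix

/-- for `α_i = a + i d` and the alternating sequence `β_i = (-1)^i a`,
`det(P_{α,β}(n)) = a (2d + a)^{n-1}`. -/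
theorem det_genPascal_arith_alternating (a d : ℂ) (n : ℕ) (hn : 0 < n) :
    (genPascal (fun i => a + (i : ℂ) * d) (fun i => (-1 : ℂ) ^ i * a) n).det =
      a * (2 * d + a) ^ (n - 1) := by
  obtain ⟨m, rfl⟩ := Nat.exists_eq_succ_of_ne_zero hn.ne'
  set α : ℕ → ℂ := fun k => if k = 0 then a else if k = 1 then d else 0
  set β : ℕ → ℂ := fun l => (-2) ^ l * a
  have hα : checkSeq α = fun i : ℕ => a + (i : ℂ) * d := funext (checkSeq_affine a d)
  have hβ : checkSeq β = fun i : ℕ => (-1 : ℂ) ^ i * a := by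
    funext i
    rw [checkSeq_geometric]
    norm_num
  rw [← hα, ← hβ, det_genPascal_checkSeq (by simp [α, β]),
    det_toeplitz_of_geometric (-2) (fun l => rfl)]
  simp [α, add_comm]
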